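/- Let T : L^n → M be a symmetric lattice n-homomorphism between distributive lattices, n ≥ 2, with diagonal P_T(x) := T(x,...,x). Then P_T is a lattice homomorphism if and only if ⋀_{i=1}^n P_T(x_i) ≤ T(x_1,...,x_n) ≤ ⋁_{i=1}^n P_T(x_i) holds for all x_1,...,x_n ∈ L. -/

import Mathlib

def median {L : Type*} [DistribLattice L] {n : ℕ} (k : ℕ) (hk1 : 1 ≤ k) (hkn : k ≤ n)
    (x : Fin n → L) : L :=
  ((Finset.univ.powersetCard (n + 1 - k)).attach).sup'
    (Finset.attach_nonempty_iff.mpr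
      (Finset.powersetCard_nonempty.mpr (by simp [Finset.card_univ]; omega)))
    fun s => s.1.inf'
      (Finset.card_pos.mp (by
        have h := (Finset.mem_powersetCard.mp s.2).2
        omega)) x

def medianInf {L : Type*} [DistribLattice L] {n : ℕ} (k : ℕ) (hk1 : 1 ≤ k) (hkn : k ≤ n)
    (x : Fin n → L) : L :=
  ((Finset.univ.powersetCard (n + 1 - k)).attach).inf'
    (Finset.attach_nonempty_iff.mpr
      (Finset.powersetCard_nonempty.mpr (by simp [Finset.card_univ]; omega)))
    fun s => s.1.sup'
      (Finset.card_pos.mp (by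
        have h := (Finset.mem_powersetCard.mp s.2).2
        omega)) x
def TotalOrderizationInvariant {L : Type*} [DistribLattice L] {A : Type*} {n : ℕ}
    (T : (Fin n → L) → A) : Prop :=
  ∀ x : Fin n → L,
    T x = T fun k => median (k.1 + 1) (Nat.succ_le_succ (Nat.zero_le _)) k.2 x

/-- `T` is symmetric: invariant under every permutation of its arguments. -/
def IsSymmetricMap {L A : Type*} {n : ℕ} (T : (Fin n → L) → A) : Prop :=
  ∀ (σ : Equiv.Perm (Fin n)) (x : Fin n → L), T (x ∘ σ) = T x
/-- `T : Lⁿ → M` is a lattice n-homomorphism: in each coordinate separately it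
preserves binary joins and binary meets. -/
def IsLatticeMultiHom {L M : Type*} [DistribLattice L] [DistribLattice M] {n : ℕ}
    (T : (Fin n → L) → M) : Prop :=
  ∀ (x : Fin n → L) (i : Fin n) (y : L),
    T (Function.update x i (x i ⊔ y)) = T x ⊔ T (Function.update x i y) ∧
    T (Function.update x i (x i ⊓ y)) = T x ⊓ T (Function.update x i y)

/-- `P : L → M` is a lattice homomorphism. -/
def IsLatticeHomMap {L M : Type*} [DistribLattice L] [DistribLattice M] (P : L → M) : Prop :=
  ∀ a b : L, P (a ⊔ b) = P a ⊔ P b ∧ P (a ⊓ b) = P a ⊓ P b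

/-!
Preserving binary joins in each coordinate makes `T` monotone, so if the diagonal `P` is a
lattice homomorphism then `P (⋀ xᵢ) ≤ T x ≤ P (⋁ xᵢ)` gives the two bounds. Conversely,
expanding `T (a ⊔ b, …, a ⊔ b)` one coordinate at a time writes it as the join of the values
`T z` with every `zᵢ ∈ {a, b}`, and each of these is at most `⋁ᵢ P (zᵢ) ≤ P a ⊔ P b`;
meets are the order dual.
-/

namespace IsLatticeMultiHom

variable {L M : Type*} [DistribLattice L] [DistribLattice M] {n : ℕ} {T : (Fin n → L) → M}

open Function OrderDual

theorem update_sup (hT : IsLatticeMultiHom T) (x : Fin n → L) (i : Fin n) (a b : L) :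
    T (update x i (a ⊔ b)) = T (update x i a) ⊔ T (update x i b) := by
  simpa using (hT (update x i a) i b).1

theorem dual (hT : IsLatticeMultiHom T) :
    IsLatticeMultiHom fun x : Fin n → Lᵒᵈ => toDual (T (ofDual ∘ x)) :=
  fun x i y => ⟨(hT (ofDual ∘ x) i (ofDual y)).2, (hT (ofDual ∘ x) i (ofDual y)).1⟩

theorem monotone (hT : IsLatticeMultiHom T) : Monotone T := by
  intro x y hxy
  suffices ∀ s : Finset (Fin n), T x ≤ T (s.piecewise y x) by
    simpa using this Finset.univ
  intro s
  induction s using Finset.induction with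
  | empty => simp
  | insert j s hj ih =>
    set w := s.piecewise y x
    have hwj : w j = x j := s.piecewise_eq_of_notMem _ _ hj
    calc T x ≤ T w := ih
      _ ≤ T (update w j (w j)) ⊔ T (update w j (y j)) := by simp
      _ = T ((insert j s).piecewise y x) := by
        rw [← hT.update_sup, hwj, sup_eq_right.2 (hxy j), Finset.piecewise_insert]

theorem map_sup_le (hT : IsLatticeMultiHom T) {x y : Fin n → L} {u : M}
    (h : ∀ z : Fin n → L, (∀ i, z i = x i ∨ z i = y i) → T z ≤ u) : T (x ⊔ y) ≤ u := by
  suffices ∀ s : Finset (Fin n), ∀ z : Fin n → L, (∀ i, z i = x i ∨ z i = y i) →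
      T (s.piecewise (x ⊔ y) z) ≤ u by
    simpa using this Finset.univ x fun _ => .inl rfl
  intro s
  induction s using Finset.induction with
  | empty => simpa using h
  | insert j s hj ih =>
    intro z hz
    have hupd : ∀ c, c = x j ∨ c = y j → T (s.piecewise (x ⊔ y) (update z j c)) ≤ u :=
      fun c hc => ih _ fun i => by rcases eq_or_ne i j with rfl | hij <;> simp [*]
    rw [Finset.piecewise_insert, Pi.sup_apply, hT.update_sup,
      s.update_piecewise_of_notMem _ _ hj,
      s.update_piecewise_of_notMem _ _ hj]
    exact sup_le (hupd _ (.inl rfl)) (hupd _ (.inr rfl))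

theorem le_map_inf (hT : IsLatticeMultiHom T) {x y : Fin n → L} {u : M}
    (h : ∀ z : Fin n → L, (∀ i, z i = x i ∨ z i = y i) → u ≤ T z) : u ≤ T (x ⊓ y) :=
  hT.dual.map_sup_le (x := toDual ∘ x) (y := toDual ∘ y) (u := toDual u) fun z hz =>
    h (ofDual ∘ z) hz

theorem inf'_diagonal_le (hT : IsLatticeMultiHom T) [Nonempty (Fin n)]
    (hP : IsLatticeHomMap fun a : L => T fun _ => a) (x : Fin n → L) :
    Finset.univ.inf' Finset.univ_nonempty (fun i => T fun _ => x i) ≤ T x :=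
  calc _ = T fun _ => Finset.univ.inf' Finset.univ_nonempty x :=
        (Finset.apply_inf'_eq_inf'_comp _ (fun a => T fun _ => a) fun a b => (hP a b).2).symm
    _ ≤ T x := hT.monotone fun i => Finset.inf'_le _ (Finset.mem_univ i)

theorem le_sup'_diagonal (hT : IsLatticeMultiHom T) [Nonempty (Fin n)]
    (hP : IsLatticeHomMap fun a : L => T fun _ => a) (x : Fin n → L) :
    T x ≤ Finset.univ.sup' Finset.univ_nonempty (fun i => T fun _ => x i) :=
  calc T x ≤ T fun _ => Finset.univ.sup' Finset.univ_nonempty x :=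
        hT.monotone fun i => Finset.le_sup' _ (Finset.mem_univ i)
    _ = _ := Finset.apply_sup'_eq_sup'_comp _ (fun a => T fun _ => a) fun a b => (hP a b).1

end IsLatticeMultiHom

/-- The diagonal of a symmetric lattice n-homomorphism is a lattice homomorphism iff
⋀ᵢ P_T(xᵢ) ≤ T(x₁,...,xₙ) ≤ ⋁ᵢ P_T(xᵢ) holds for all arguments. -/
theorem diagonal_latticeHom_iff {L M : Type*} [DistribLattice L] [DistribLattice M]
    {n : ℕ} (hn : 2 ≤ n) (T : (Fin n → L) → M) (hT : IsLatticeMultiHom T) :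
    IsLatticeHomMap (fun x : L => T fun _ => x) ↔
      ∀ x : Fin n → L,
        (Finset.univ.inf'
            (by have : Nonempty (Fin n) := ⟨⟨0, by omega⟩⟩; exact Finset.univ_nonempty)
            (fun i => T fun _ => x i)) ≤ T x ∧
        T x ≤ Finset.univ.sup'
            (by have : Nonempty (Fin n) := ⟨⟨0, by omega⟩⟩; exact Finset.univ_nonempty)
            (fun i => T fun _ => x i) := by
  have : Nonempty (Fin n) := ⟨⟨0, by omega⟩⟩
  constructor
  · exact fun hP x => ⟨hT.inf'_diagonal_le hP x, hT.le_sup'_diagonal hP x⟩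
  intro hbd a b
  have hmono : Monotone fun a : L => T fun _ => a := hT.monotone.comp Function.const_mono
  constructor
  · refine (hT.map_sup_le (x := fun _ => a) (y := fun _ => b) fun z hz => ?_).antisymm
      (hmono.le_map_sup a b)
    exact (hbd z).2.trans (Finset.sup'_le _ _ fun i _ => by rcases hz i with h | h <;> simp [h])
  · refine (hmono.map_inf_le a b).antisymm
      (hT.le_map_inf (x := fun _ => a) (y := fun _ => b) fun z hz => ?_)
    exact (Finset.le_inf' _ _ fun i _ => by rcases hz i with h | h <;> simp [h]).trans (hbd z).1
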